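/- Let n, t ≥ 1 and let d, d' ≥ 2 be integers with d ∤ n, d' ∤ t, d ≤ n, and d' ≤ t. Then d_simp(a^n b^t; F₂) ≤ d_prim(a^n b^t; F₂) ≤ d + d' − 2. -/

import Mathlib

noncomputable section

abbrev F2 := FreeGroup (Fin 2)

def a : F2 := FreeGroup.of 0
def b : F2 := FreeGroup.of 1

/-- An element of a group is primitive if it belongs to some free basis of the group. -/
def Primitive {G : Type*} [Group G] (g : G) : Prop :=
  ∃ (ι : Type) (bas : FreeGroupBasis ι G) (i : ι), bas i = g

/-- An element of a group is simple if it lies in a proper free factor, i.e. there is a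
free product decomposition `G = A ∗ B` with `A`, `B` nontrivial and `g ∈ A`. -/
def SimpleElem {G : Type*} [Group G] (g : G) : Prop :=
  ∃ A B : Subgroup G, A ≠ ⊥ ∧ B ≠ ⊥ ∧ g ∈ A ∧
    Function.Bijective (Monoid.Coprod.lift A.subtype B.subtype)

/-- The primitivity index: the smallest (finite) index of a subgroup `H ≤ F₂` containing `g`
in which `g` is primitive. -/
def dPrim (g : F2) : ℕ :=
  sInf {n : ℕ | 0 < n ∧ ∃ H : Subgroup F2, H.index = n ∧
    ∃ hg : g ∈ H, Primitive (⟨g, hg⟩ : H)}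

/-- The simplicity index: the smallest (finite) index of a subgroup `H ≤ F₂` containing `g`
in which `g` is simple. -/
def dSimp (g : F2) : ℕ :=
  sInf {n : ℕ | 0 < n ∧ ∃ H : Subgroup F2, H.index = n ∧
    ∃ hg : g ∈ H, SimpleElem (⟨g, hg⟩ : H)}

/-- `smallestNonDivisor n` is the smallest integer `d ≥ 2` with `d ∤ n`. -/
def smallestNonDivisor (n : ℕ) : ℕ := sInf {d : ℕ | 2 ≤ d ∧ ¬ d ∣ n}

/-!
Write `n = q d + r` and `t = q' d' + s` with `0 < r < d` and `0 < s < d'`. Glue a cycle of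
`a`-edges of length `d` to a cycle of `b`-edges of length `d'` at two vertices: the base point,
and the vertex reached from it by `a ^ (d - r)` and by `b ^ s`. Then `F₂` acts on the
`d + d' - 2` vertices and `a ^ n * b ^ t` fixes the base point, so it lies in its stabilizer `H`,
of index `d + d' - 2`. A spanning tree gives `H` the free basis of Schreier generators of the
non-tree edges; among them are `X = a ^ d`, `Y = a ^ (r - d) * b ^ s` and
`Z = b ^ (d' - s) * a ^ (d - r)`, and `a ^ n * b ^ t = X ^ (q + 1) * (Y * Z) ^ q' * Y` is the image
of `Y` under a product of two transvections, hence primitive in `H`.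

A primitive element of a free group of rank at least two lies in a proper free factor, and a
subgroup of finite index in `F₂` is not cyclic; hence `d_simp ≤ d_prim`.
-/

open Function
open FreeGroup (of)

namespace FreeGroup

theorem of_pow_mul_of_pow_ne {α : Type*} [DecidableEq α] {x y : α} (hxy : x ≠ y) {m n : ℕ}
    (hm : m ≠ 0) (hn : n ≠ 0) : of x ^ m * of y ^ n ≠ of y ^ n * of x ^ m := by
  have hword : ∀ (u v : α) (k l : ℕ), (of u ^ k * of v ^ l).toWord =
      List.replicate k (u, true) ++ List.replicate l (v, true) := by
    intro u v k l
    rw [toWord_mul, toWord_of_pow, toWord_of_pow, IsReduced.reduce_eq]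
    refine List.Pairwise.isChain (List.pairwise_of_forall_mem_list fun p hp q hq _ => ?_)
    simp only [List.mem_append, List.mem_replicate] at hp hq
    rcases hp with ⟨-, rfl⟩ | ⟨-, rfl⟩ <;>
      rcases hq with ⟨-, rfl⟩ | ⟨-, rfl⟩ <;> rfl
  intro h
  have := congrArg (fun w => w.toWord.head?) h
  obtain ⟨m, rfl⟩ := Nat.exists_eq_succ_of_ne_zero hm
  obtain ⟨n, rfl⟩ := Nat.exists_eq_succ_of_ne_zero hn
  simp only [hword, List.replicate_succ, List.cons_append, List.head?_cons, Option.some.injEq,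
    Prod.mk.injEq, and_true] at this
  exact hxy this

def sumEquivCoprod (α β : Type*) :
    FreeGroup (α ⊕ β) ≃* Monoid.Coprod (FreeGroup α) (FreeGroup β) :=
  MonoidHom.toMulEquiv (lift (Sum.elim (Monoid.Coprod.inl ∘ of) (Monoid.Coprod.inr ∘ of)))
    (Monoid.Coprod.lift (map Sum.inl) (map Sum.inr))
    (by ext (i | i) <;> simp)
    (by apply Monoid.Coprod.hom_ext <;> ext <;> simp)

theorem of_mem_closure_compl {T : Type*} {x y : T} (hx : x ≠ y) :
    of x ∈ Subgroup.closure (of '' {y}ᶜ) :=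
  Subgroup.subset_closure ⟨x, hx, rfl⟩

variable {T : Type*} [DecidableEq T]

def transvectionHom (y : T) (w : FreeGroup T) : FreeGroup T →* FreeGroup T :=
  FreeGroup.lift fun x => if x = y then w * of x else of x

theorem transvectionHom_of_ne {y x : T} (w : FreeGroup T) (hx : x ≠ y) :
    transvectionHom y w (of x) = of x := by
  simp [transvectionHom, hx]

theorem transvectionHom_of_self (y : T) (w : FreeGroup T) :
    transvectionHom y w (of y) = w * of y := by
  simp [transvectionHom]

theorem transvectionHom_eq_self {y : T} (w : FreeGroup T) {u : FreeGroup T}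
    (hu : u ∈ Subgroup.closure (of '' {y}ᶜ)) : transvectionHom y w u = u := by
  suffices Subgroup.closure (of '' {y}ᶜ) ≤ (transvectionHom y w).eqLocus (MonoidHom.id _) from
    this hu
  rw [Subgroup.closure_le]
  rintro _ ⟨x, hx, rfl⟩
  exact transvectionHom_of_ne w hx

def transvection (y : T) (w : FreeGroup T) (hw : w ∈ Subgroup.closure (of '' {y}ᶜ)) :
    FreeGroup T ≃* FreeGroup T :=
  MonoidHom.toMulEquiv (transvectionHom y w) (transvectionHom y w⁻¹)
    (by
      ext x
      by_cases hx : x = y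
      · subst hx
        simp [transvectionHom_of_self, transvectionHom_eq_self _ hw]
      · simp [transvectionHom_of_ne _ hx])
    (by
      ext x
      by_cases hx : x = y
      · subst hx
        simp [transvectionHom_of_self, transvectionHom_eq_self _ (inv_mem hw)]
      · simp [transvectionHom_of_ne _ hx])

theorem transvection_of_self (y : T) (w : FreeGroup T) (hw) :
    transvection y w hw (of y) = w * of y :=
  transvectionHom_of_self y w

theorem transvection_of_ne {y x : T} (w : FreeGroup T) (hw) (hx : x ≠ y) :
    transvection y w hw (of x) = of x :=
  transvectionHom_of_ne w hx

end FreeGroup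

theorem FreeGroupBasis.exists_ne_of_mul_ne {ι G : Type*} [Group G] (bas : FreeGroupBasis ι G)
    (i : ι) {x y : G} (hxy : x * y ≠ y * x) : ∃ j, j ≠ i := by
  by_contra! h
  have : Unique ι := { default := i, uniq := h }
  have : IsCyclic G := isCyclic_of_surjective bas.repr.symm.toMonoidHom bas.repr.symm.surjective
  exact hxy (IsCyclic.commGroup.mul_comm x y)

theorem simpleElem_of_mulEquiv_coprod {G M N : Type*} [Group G] [Group M] [Group N]
    [Nontrivial M] [Nontrivial N] (e : Monoid.Coprod M N ≃* G) (m : M) :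
    SimpleElem (e (Monoid.Coprod.inl m)) := by
  have hinl : Injective (e.toMonoidHom.comp Monoid.Coprod.inl) :=
    e.injective.comp Monoid.Coprod.inl_injective
  have hinr : Injective (e.toMonoidHom.comp Monoid.Coprod.inr) :=
    e.injective.comp Monoid.Coprod.inr_injective
  set eA := MonoidHom.ofInjective hinl
  set eB := MonoidHom.ofInjective hinr
  have hlift : (Monoid.Coprod.lift (MonoidHom.range _).subtype (MonoidHom.range _).subtype).comp
      (MulEquiv.coprodCongr eA eB).toMonoidHom = e.toMonoidHom := by
    apply Monoid.Coprod.hom_ext <;> ext <;> rfl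
  refine ⟨(e.toMonoidHom.comp Monoid.Coprod.inl).range,
    (e.toMonoidHom.comp Monoid.Coprod.inr).range, ?_, ?_, ⟨m, rfl⟩, ?_⟩
  · refine MonoidHom.range_eq_bot_iff.not.2 fun h => ?_
    obtain ⟨x, hx⟩ := exists_ne (1 : M)
    exact hx (hinl ((DFunLike.congr_fun h x).trans (map_one _).symm))
  · refine MonoidHom.range_eq_bot_iff.not.2 fun h => ?_
    obtain ⟨x, hx⟩ := exists_ne (1 : N)
    exact hx (hinr ((DFunLike.congr_fun h x).trans (map_one _).symm))
  · rw [← Bijective.of_comp_iff _ (MulEquiv.coprodCongr eA eB).bijective]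
    convert e.bijective using 1
    exact congrArg DFunLike.coe hlift

theorem FreeGroupBasis.simpleElem {ι G : Type*} [Group G] (bas : FreeGroupBasis ι G)
    {i j : ι} (hij : j ≠ i) : SimpleElem (bas i) := by
  classical
  have : Nonempty {k // k ≠ i} := ⟨⟨j, hij⟩⟩
  exact simpleElem_of_mulEquiv_coprod
    ((FreeGroup.sumEquivCoprod {k // k = i} {k // k ≠ i}).symm.trans
      ((FreeGroup.freeGroupCongr (Equiv.sumCompl (· = i))).trans bas.repr.symm)) (of ⟨i, rfl⟩)

theorem primitive_of_mulEquiv {T G : Type} [Group G] (E : FreeGroup T ≃* G) (y : T) :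
    Primitive (E (of y)) :=
  ⟨T, FreeGroupBasis.ofRepr E.symm, y, rfl⟩

namespace Schreier

section SkewProduct

variable {S V G : Type*} [Group G]

def skewPerm (τ : Equiv.Perm V) (c : V → G) : Equiv.Perm (V × G) where
  toFun x := (τ x.1, c x.1 * x.2)
  invFun x := (τ.symm x.1, (c (τ.symm x.1))⁻¹ * x.2)
  left_inv x := by simp
  right_inv x := by simp

variable (σ : S → Equiv.Perm V) (c : S → V → G)

/-- Reading the cocycle of the action on `V` with edge labels `c` off the action on `V × G`
avoids any recursion on reduced words. -/
def skewAction : FreeGroup S →* Equiv.Perm (V × G) :=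
  FreeGroup.lift fun x => skewPerm (σ x) (c x)

def cocycle (g : FreeGroup S) (v : V) : G := (skewAction σ c g (v, 1)).2

theorem skewAction_apply (g : FreeGroup S) (v : V) (w : G) :
    skewAction σ c g (v, w) = (FreeGroup.lift σ g v, cocycle σ c g v * w) := by
  induction g using FreeGroup.induction_on generalizing v w with
  | C1 => simp [cocycle]
  | of x => simp [skewAction, skewPerm, cocycle]
  | inv_of x _ => simp [skewAction, skewPerm, cocycle, Equiv.Perm.inv_def]
  | mul g h ihg ihh =>
    have hmul : ∀ w, skewAction σ c (g * h) (v, w) = (FreeGroup.lift σ (g * h) v,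
        cocycle σ c g (FreeGroup.lift σ h v) * cocycle σ c h v * w) := fun w => by
      rw [map_mul, Equiv.Perm.mul_apply, ihh, ihg, map_mul, Equiv.Perm.mul_apply, mul_assoc]
    rw [hmul, show cocycle σ c (g * h) v = _ from congrArg Prod.snd (hmul 1), mul_one]

theorem cocycle_one (v : V) : cocycle σ c 1 v = 1 := by simp [cocycle]

theorem cocycle_of (x : S) (v : V) : cocycle σ c (of x) v = c x v := by
  simp [cocycle, skewAction, skewPerm]

theorem cocycle_mul (g h : FreeGroup S) (v : V) :
    cocycle σ c (g * h) v = cocycle σ c g (FreeGroup.lift σ h v) * cocycle σ c h v := by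
  change (skewAction σ c (g * h) (v, 1)).2 = _
  rw [map_mul, Equiv.Perm.mul_apply, skewAction_apply, skewAction_apply, mul_one]

theorem cocycle_inv_apply (g : FreeGroup S) (v : V) :
    cocycle σ c g⁻¹ (FreeGroup.lift σ g v) = (cocycle σ c g v)⁻¹ := by
  rw [eq_inv_iff_mul_eq_one, ← cocycle_mul]
  simp [cocycle_one]

end SkewProduct

variable {S V : Type*} (σ : S → Equiv.Perm V) (t : V → FreeGroup S)

def schreierElem (x : S) (v : V) : FreeGroup S := t (σ x v) * of x * (t v)⁻¹

def NontreeEdge : Type _ := {e : S × V // schreierElem σ t e.1 e.2 ≠ 1}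

open Classical in
def schreierLabel (x : S) (v : V) : FreeGroup (NontreeEdge σ t) :=
  if h : schreierElem σ t x v = 1 then 1 else of ⟨(x, v), h⟩

def schreierHom : FreeGroup (NontreeEdge σ t) →* FreeGroup S :=
  FreeGroup.lift fun e => schreierElem σ t e.1.1 e.1.2

theorem schreierHom_schreierLabel (x : S) (v : V) :
    schreierHom σ t (schreierLabel σ t x v) = schreierElem σ t x v := by
  unfold schreierLabel
  split_ifs with h
  · rw [map_one, h]
  · exact FreeGroup.lift_apply_of

theorem schreierHom_cocycle (g : FreeGroup S) (v : V) :
    schreierHom σ t (cocycle σ (schreierLabel σ t) g v) =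
      t (FreeGroup.lift σ g v) * g * (t v)⁻¹ := by
  induction g using FreeGroup.induction_on generalizing v with
  | C1 => simp [cocycle_one]
  | of x => simp [cocycle_of, schreierHom_schreierLabel, schreierElem]
  | inv_of x ih =>
    obtain ⟨u, rfl⟩ := (FreeGroup.lift σ (of x)).surjective v
    rw [cocycle_inv_apply, map_inv, ih, map_inv, Equiv.Perm.coe_inv, Equiv.symm_apply_apply]
    group
  | mul g h ihg ihh =>
    rw [cocycle_mul, map_mul, ihg, ihh, map_mul, Equiv.Perm.mul_apply]
    group

theorem lift_pow_apply_and_cocycle_pow_eq_one {x : S} {f : ℕ → V} {k : ℕ}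
    (hstep : ∀ i < k, σ x (f i) = f (i + 1))
    (htree : ∀ i < k, schreierElem σ t x (f i) = 1) :
    FreeGroup.lift σ (of x ^ k) (f 0) = f k ∧
      cocycle σ (schreierLabel σ t) (of x ^ k) (f 0) = 1 := by
  induction k with
  | zero => simp [cocycle_one]
  | succ k ih =>
    obtain ⟨hlift, hcoc⟩ := ih (fun i hi => hstep i (by omega)) (fun i hi => htree i (by omega))
    rw [pow_succ', cocycle_mul, map_mul, Equiv.Perm.mul_apply, hlift, hcoc, cocycle_of,
      schreierLabel, dif_pos (htree k (by omega)), FreeGroup.lift_apply_of, hstep k (by omega)]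
    exact ⟨rfl, one_mul 1⟩

variable (v₀ : V)

/-- `(t v)⁻¹` is a path from `v₀` to `v` along tree edges, the edges with trivial Schreier
element. -/
structure IsTreeTransversal : Prop where
  root : t v₀ = 1
  lift_inv : ∀ v, FreeGroup.lift σ (t v)⁻¹ v₀ = v
  cocycle_inv : ∀ v, cocycle σ (schreierLabel σ t) (t v)⁻¹ v₀ = 1

def vertexStabilizer : Subgroup (FreeGroup S) :=
  (MulAction.stabilizer (Equiv.Perm V) v₀).comap (FreeGroup.lift σ)

theorem mem_vertexStabilizer {g : FreeGroup S} :
    g ∈ vertexStabilizer σ v₀ ↔ FreeGroup.lift σ g v₀ = v₀ := Iff.rfl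

variable {σ t v₀}

theorem IsTreeTransversal.lift_apply (hT : IsTreeTransversal σ t v₀) (v : V) :
    FreeGroup.lift σ (t v) v = v₀ := by
  have := hT.lift_inv v
  rwa [map_inv, Equiv.Perm.inv_eq_iff_eq, eq_comm] at this

theorem IsTreeTransversal.cocycle_apply (hT : IsTreeTransversal σ t v₀) (v : V) :
    cocycle σ (schreierLabel σ t) (t v) v = 1 := by
  have := cocycle_inv_apply σ (schreierLabel σ t) (t v)⁻¹ v₀
  rwa [inv_inv, hT.lift_inv, hT.cocycle_inv, inv_one] at this

theorem IsTreeTransversal.schreierElem_mem (hT : IsTreeTransversal σ t v₀) (x : S) (v : V) :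
    schreierElem σ t x v ∈ vertexStabilizer σ v₀ := by
  rw [mem_vertexStabilizer, schreierElem, map_mul, map_mul, Equiv.Perm.mul_apply,
    Equiv.Perm.mul_apply, hT.lift_inv, FreeGroup.lift_apply_of, hT.lift_apply]

theorem IsTreeTransversal.cocycle_schreierElem (hT : IsTreeTransversal σ t v₀) (x : S)
    (v : V) :
    cocycle σ (schreierLabel σ t) (schreierElem σ t x v) v₀ = schreierLabel σ t x v := by
  rw [schreierElem, cocycle_mul, cocycle_mul, hT.lift_inv, FreeGroup.lift_apply_of,
    hT.cocycle_apply, cocycle_of, hT.cocycle_inv, one_mul, mul_one]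

theorem IsTreeTransversal.index_vertexStabilizer [Finite V] (hT : IsTreeTransversal σ t v₀) :
    (vertexStabilizer σ v₀).index = Nat.card V := by
  let _ := MulAction.compHom V (FreeGroup.lift σ)
  have : MulAction.IsPretransitive (FreeGroup S) V :=
    ⟨fun v w => ⟨(t w)⁻¹ * t v, by
      change FreeGroup.lift σ ((t w)⁻¹ * t v) v = w
      rw [map_mul, Equiv.Perm.mul_apply, hT.lift_apply, hT.lift_inv]⟩⟩
  exact MulAction.index_stabilizer_of_transitive (FreeGroup S) v₀

def stabilizerCocycle : vertexStabilizer σ v₀ →* FreeGroup (NontreeEdge σ t) where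
  toFun g := cocycle σ (schreierLabel σ t) g v₀
  map_one' := cocycle_one _ _ _
  map_mul' g h := by
    simp only [Subgroup.coe_mul, cocycle_mul, (mem_vertexStabilizer σ v₀).1 h.2]

def IsTreeTransversal.schreierEquiv (hT : IsTreeTransversal σ t v₀) :
    FreeGroup (NontreeEdge σ t) ≃* vertexStabilizer σ v₀ :=
  MonoidHom.toMulEquiv
    ((schreierHom σ t).codRestrict _ fun w => FreeGroup.range_lift_le
      (by rintro _ ⟨e, rfl⟩; exact hT.schreierElem_mem _ _) ⟨w, rfl⟩)
    stabilizerCocycle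
    (by
      ext e
      change cocycle σ (schreierLabel σ t) (schreierHom σ t (of e)) v₀ = of e
      rw [schreierHom, FreeGroup.lift_apply_of, hT.cocycle_schreierElem, schreierLabel,
        dif_neg e.2]
      rfl)
    (by
      ext g
      simp [stabilizerCocycle, schreierHom_cocycle, (mem_vertexStabilizer σ v₀).1 g.2, hT.root])

theorem IsTreeTransversal.schreierEquiv_of (hT : IsTreeTransversal σ t v₀)
    (e : NontreeEdge σ t) :
    (hT.schreierEquiv (of e) : FreeGroup S) = schreierElem σ t e.1.1 e.1.2 := by
  simp [schreierEquiv, schreierHom]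

end Schreier

theorem pow_mul_pow_eq_word_in_generators {G : Type*} [Group G] (x y : G) {d d' p s : ℕ}
    (q q' : ℕ) (hp : p ≤ d) (hs : s ≤ d') :
    (x ^ d) ^ (q + 1) * ((x ^ p)⁻¹ * y ^ s * (y ^ (d' - s) * x ^ p)) ^ q' *
        ((x ^ p)⁻¹ * y ^ s) =
      x ^ (q * d + (d - p)) * y ^ (q' * d' + s) := by
  have hconj : (x ^ p)⁻¹ * y ^ s * (y ^ (d' - s) * x ^ p) =
      (x ^ p)⁻¹ * y ^ d' * ((x ^ p)⁻¹)⁻¹ := by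
    rw [inv_inv, ← mul_assoc, mul_assoc _ (y ^ s), ← pow_add, Nat.add_sub_cancel' hs]
  have hx : (x ^ d) ^ (q + 1) = x ^ (q * d + (d - p)) * x ^ p := by
    rw [← pow_mul, ← pow_add]
    congr 1
    rw [Nat.mul_comm, Nat.succ_mul]
    omega
  rw [hconj, conj_pow, hx, pow_add y, mul_comm q' d', pow_mul]
  group

def cyclePerm {V : Type*} [DecidableEq V] {m : ℕ} (f : Fin m → V) : Equiv.Perm V :=
  (List.ofFn f).formPerm

theorem cyclePerm_apply {V : Type*} [DecidableEq V] {m : ℕ} [NeZero m] {f : Fin m → V}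
    (hf : Injective f) (i : Fin m) : cyclePerm f (f i) = f (i + 1) := by
  have := List.formPerm_apply_getElem (List.ofFn f) (List.nodup_ofFn.2 hf) i (by simp)
  simp only [List.getElem_ofFn, List.length_ofFn] at this
  rw [cyclePerm, this]
  congr 1
  ext
  simp [Fin.val_add]

namespace ThetaGraph

open Schreier Fin.NatCast

/-- The `a`-cycle is `Fin d`; the `b`-cycle is `Fin d'`, whose positions `0` and `s` are the
`a`-positions `0` and `p`. -/
abbrev Vertex (d : ℕ) {d' : ℕ} [NeZero d'] (s : Fin d') : Type :=
  Fin d ⊕ {k : Fin d' // k ≠ 0 ∧ k ≠ s}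

theorem card_vertex {d d' : ℕ} [NeZero d'] {s : Fin d'} (hs : s ≠ 0) :
    Nat.card (Vertex d s) = d + d' - 2 := by
  have hcompl :
      (Finset.univ.filter fun k : Fin d' => k ≠ 0 ∧ k ≠ s) = Finset.univ \ {0, s} := by
    ext k
    simp [not_or]
  have := s.isLt
  have := Fin.val_ne_zero_iff.2 hs
  rw [Nat.card_eq_fintype_card, Fintype.card_sum, Fintype.card_fin, Fintype.card_subtype, hcompl,
    Finset.card_univ_sdiff, Finset.card_pair hs.symm, Fintype.card_fin]
  omega

variable {d d' : ℕ} [NeZero d] [NeZero d'] (p : Fin d) (s : Fin d')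

def bCycle (k : Fin d') : Vertex d s :=
  if h : k ≠ 0 ∧ k ≠ s then Sum.inr ⟨k, h⟩ else if k = 0 then Sum.inl 0 else Sum.inl p

def gens : Fin 2 → Equiv.Perm (Vertex d s) := ![cyclePerm Sum.inl, cyclePerm (bCycle p s)]

def transversal : Vertex d s → F2
  | Sum.inl j => (a ^ (j : ℕ))⁻¹
  | Sum.inr k =>
    if k.1 < s then (b ^ (k.1 : ℕ))⁻¹ else (b ^ ((k.1 : ℕ) - s) * a ^ (p : ℕ))⁻¹

variable {p s}

theorem bCycle_injective (hp : p ≠ 0) : Injective (bCycle p s) := by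
  intro k l h
  unfold bCycle at h
  split_ifs at h <;> simp_all

theorem bCycle_zero : bCycle p s 0 = Sum.inl 0 := by simp [bCycle]

theorem bCycle_self (hs : s ≠ 0) : bCycle p s s = Sum.inl p := by simp [bCycle, hs]

theorem bCycle_of_ne {k : Fin d'} (hk : k ≠ 0 ∧ k ≠ s) : bCycle p s k = Sum.inr ⟨k, hk⟩ :=
  dif_pos hk

local notation "κ" => cocycle (gens p s) (schreierLabel (gens p s) (transversal p s))

theorem walk_a {j : ℕ} (hj : j < d) :
    FreeGroup.lift (gens p s) (a ^ j) (Sum.inl 0) = Sum.inl (j : Fin d) ∧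
      κ (a ^ j) (Sum.inl 0) = 1 := by
  have := lift_pow_apply_and_cocycle_pow_eq_one (gens p s) (transversal p s) (x := 0)
    (f := fun i => Sum.inl (i : Fin d)) (k := j) ?_ ?_
  · simpa [a] using this
  · intro i _
    simp [gens, cyclePerm_apply Sum.inl_injective]
  · intro i hi
    have h1 : ((i + 1 : ℕ) : Fin d).val = i + 1 := Fin.val_cast_of_lt (by omega)
    have h2 : ((i : ℕ) : Fin d).val = i := Fin.val_cast_of_lt (by omega)
    simp only [schreierElem, gens, Matrix.cons_val_zero, cyclePerm_apply Sum.inl_injective,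
      ← Nat.cast_succ, transversal, h1, h2, a]
    group

theorem transversal_bCycle_of_lt {i : ℕ} (hi : i < s) :
    transversal p s (bCycle p s i) = (b ^ i)⁻¹ := by
  have hi' : ((i : Fin d') : ℕ) = i := Fin.val_cast_of_lt (by omega)
  rcases Nat.eq_zero_or_pos i with rfl | hpos
  · simp [bCycle_zero, transversal]
  · have hne : (i : Fin d') ≠ 0 ∧ (i : Fin d') ≠ s := by
      constructor <;> intro h <;> simp [Fin.ext_iff, hi'] at h <;> omega
    rw [bCycle_of_ne hne, transversal, if_pos (by simpa [Fin.lt_def, hi'] using hi), hi']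

theorem transversal_bCycle_add (hs : s ≠ 0) {i : ℕ} (hi : (s : ℕ) + i < d') :
    transversal p s (bCycle p s ((s + i : ℕ) : Fin d')) = (b ^ i * a ^ (p : ℕ))⁻¹ := by
  have hi' : (((s + i : ℕ) : Fin d') : ℕ) = s + i := Fin.val_cast_of_lt hi
  rcases Nat.eq_zero_or_pos i with rfl | hpos
  · rw [Nat.add_zero, Fin.cast_val_eq_self, bCycle_self hs]
    simp [transversal]
  · have hs' : (s : ℕ) ≠ 0 := Fin.val_ne_zero_iff.2 hs
    have hne : ((s + i : ℕ) : Fin d') ≠ 0 ∧ ((s + i : ℕ) : Fin d') ≠ s := by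
      constructor <;> intro h <;> rw [Fin.ext_iff, hi'] at h <;> simp at h <;> omega
    rw [bCycle_of_ne hne, transversal, if_neg (by rw [Fin.lt_def, hi']; omega), hi',
      Nat.add_sub_cancel_left]

theorem walk_bCycle (hp : p ≠ 0) {j i : ℕ}
    (htree : ∀ k < i,
      schreierElem (gens p s) (transversal p s) 1 (bCycle p s (j + k : ℕ)) = 1) :
    FreeGroup.lift (gens p s) (b ^ i) (bCycle p s j) = bCycle p s (j + i : ℕ) ∧
      κ (b ^ i) (bCycle p s j) = 1 := by
  have := lift_pow_apply_and_cocycle_pow_eq_one (gens p s) (transversal p s) (x := 1)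
    (f := fun k => bCycle p s (j + k : ℕ)) (k := i) ?_ htree
  · simpa [b] using this
  · intro k _
    simp [gens, cyclePerm_apply (bCycle_injective hp), add_assoc]

theorem schreierElem_b (hp : p ≠ 0) (k : ℕ) :
    schreierElem (gens p s) (transversal p s) 1 (bCycle p s k) =
      transversal p s (bCycle p s (k + 1 : ℕ)) * b * (transversal p s (bCycle p s k))⁻¹ := by
  simp [schreierElem, gens, cyclePerm_apply (bCycle_injective hp), b]

theorem walk_b_of_lt (hp : p ≠ 0) {i : ℕ} (hi : i < s) :
    FreeGroup.lift (gens p s) (b ^ i) (Sum.inl 0) = bCycle p s i ∧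
      κ (b ^ i) (Sum.inl 0) = 1 := by
  have := walk_bCycle (p := p) (s := s) (j := 0) (i := i) hp fun k hk => by
    rw [schreierElem_b hp, Nat.zero_add, transversal_bCycle_of_lt (by omega),
      transversal_bCycle_of_lt (by omega)]
    group
  simpa [bCycle_zero] using this

theorem walk_b_add (hp : p ≠ 0) (hs : s ≠ 0) {i : ℕ} (hi : (s : ℕ) + i < d') :
    FreeGroup.lift (gens p s) (b ^ i) (Sum.inl p) = bCycle p s (s + i : ℕ) ∧
      κ (b ^ i) (Sum.inl p) = 1 := by
  have := walk_bCycle (p := p) (s := s) (j := s) (i := i) hp fun k hk => by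
    rw [schreierElem_b hp, add_assoc, transversal_bCycle_add hs (by omega),
      transversal_bCycle_add hs (by omega)]
    group
  simpa [bCycle_self hs] using this

theorem isTreeTransversal (hp : p ≠ 0) (hs : s ≠ 0) :
    IsTreeTransversal (gens p s) (transversal p s) (Sum.inl 0) := by
  have hpath : ∀ v, FreeGroup.lift (gens p s) (transversal p s v)⁻¹ (Sum.inl 0) = v ∧
      κ (transversal p s v)⁻¹ (Sum.inl 0) = 1 := by
    rintro (j | ⟨k, hk⟩)
    · simpa [transversal] using walk_a (p := p) (s := s) j.isLt
    · by_cases hks : k < s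
      · have := walk_b_of_lt hp (Fin.lt_def.1 hks)
        simpa [transversal, hks, bCycle_of_ne hk] using this
      · have hb := walk_b_add hp hs (i := k - s) (by omega)
        have ha := walk_a (p := p) (s := s) p.isLt
        rw [Nat.add_sub_cancel' (by omega), Fin.cast_val_eq_self, bCycle_of_ne hk] at hb
        simp only [Fin.cast_val_eq_self] at ha
        simp only [transversal, if_neg hks, inv_inv, map_mul, Equiv.Perm.mul_apply, cocycle_mul,
          ha.1, ha.2, hb.1, hb.2, mul_one, and_self]
  exact ⟨by simp [transversal], fun v => (hpath v).1, fun v => (hpath v).2⟩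

def exponentSumA : F2 →* Multiplicative ℤ := FreeGroup.lift ![Multiplicative.ofAdd 1, 1]

theorem schreierElem_inl_last :
    schreierElem (gens p s) (transversal p s) 0 (Sum.inl (d - 1 : ℕ)) = a ^ d := by
  have hd := NeZero.one_le (n := d)
  have hlast : ((d - 1 : ℕ) : Fin d) + 1 = 0 := by
    rw [← Nat.cast_add_one, Nat.sub_add_cancel hd, Fin.natCast_self]
  have hv : (((d - 1 : ℕ) : Fin d) : ℕ) = d - 1 := Fin.val_cast_of_lt (by omega)
  simp only [schreierElem, gens, Matrix.cons_val_zero, cyclePerm_apply Sum.inl_injective, hlast,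
    transversal, hv, Fin.val_zero, pow_zero, inv_one, one_mul, inv_inv]
  rw [show (of 0 : F2) = a from rfl, ← pow_succ', Nat.sub_add_cancel hd]

theorem schreierElem_bCycle_pred (hp : p ≠ 0) (hs : s ≠ 0) :
    schreierElem (gens p s) (transversal p s) 1 (bCycle p s (s - 1 : ℕ)) =
      (a ^ (p : ℕ))⁻¹ * b ^ (s : ℕ) := by
  obtain ⟨m, hm⟩ := Nat.exists_eq_add_one_of_ne_zero (Fin.val_ne_zero_iff.2 hs)
  have hY := transversal_bCycle_add (p := p) hs (i := 0) (by have := s.isLt; omega)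
  rw [Nat.add_zero, hm, pow_zero, one_mul] at hY
  rw [schreierElem_b hp, hm, Nat.add_sub_cancel, hY, transversal_bCycle_of_lt (by omega)]
  group

theorem schreierElem_bCycle_last (hp : p ≠ 0) (hs : s ≠ 0) :
    schreierElem (gens p s) (transversal p s) 1 (bCycle p s (d' - 1 : ℕ)) =
      b ^ (d' - s) * a ^ (p : ℕ) := by
  have hd := NeZero.one_le (n := d')
  have hlt := s.isLt
  have hlast : ((d' - 1 + 1 : ℕ) : Fin d') = 0 := by rw [Nat.sub_add_cancel hd, Fin.natCast_self]
  rw [schreierElem_b hp, hlast, bCycle_zero, show d' - 1 = s + (d' - 1 - s) by omega,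
    transversal_bCycle_add hs (by omega)]
  simp only [transversal, Fin.val_zero, pow_zero, inv_one, one_mul, inv_inv, ← mul_assoc,
    ← pow_succ']
  congr 2
  omega

theorem schreierElem_inl_last_ne_one :
    schreierElem (gens p s) (transversal p s) 0 (Sum.inl (d - 1 : ℕ)) ≠ 1 := fun h => by
  rw [schreierElem_inl_last] at h
  simpa [exponentSumA, a, NeZero.ne d] using congrArg exponentSumA h

theorem schreierElem_bCycle_pred_ne_one (hp : p ≠ 0) (hs : s ≠ 0) :
    schreierElem (gens p s) (transversal p s) 1 (bCycle p s (s - 1 : ℕ)) ≠ 1 := fun h => by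
  rw [schreierElem_bCycle_pred hp hs] at h
  simpa [exponentSumA, a, b, Fin.val_ne_zero_iff.2 hp] using congrArg exponentSumA h

theorem schreierElem_bCycle_last_ne_one (hp : p ≠ 0) (hs : s ≠ 0) :
    schreierElem (gens p s) (transversal p s) 1 (bCycle p s (d' - 1 : ℕ)) ≠ 1 := fun h => by
  rw [schreierElem_bCycle_last hp hs] at h
  simpa [exponentSumA, a, b, Fin.val_ne_zero_iff.2 hp] using congrArg exponentSumA h

theorem bCycle_last_ne_bCycle_pred (hp : p ≠ 0) (hs : s ≠ 0) :
    bCycle p s (d' - 1 : ℕ) ≠ bCycle p s (s - 1 : ℕ) := fun h => by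
  have hval := congrArg Fin.val (bCycle_injective hp h)
  have := s.isLt
  have := Fin.val_ne_zero_iff.2 hs
  rw [Fin.val_cast_of_lt (by omega), Fin.val_cast_of_lt (by omega)] at hval
  omega

theorem exists_primitive_mem_vertexStabilizer (hp : p ≠ 0) (hs : s ≠ 0) {n t : ℕ}
    (hn : n % d = d - p) (ht : t % d' = s) :
    ∃ hg : a ^ n * b ^ t ∈ vertexStabilizer (gens p s) (Sum.inl 0),
      Primitive (⟨_, hg⟩ : vertexStabilizer (gens p s) (Sum.inl 0)) := by
  classical
  have hT := isTreeTransversal hp hs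
  let X : NontreeEdge (gens p s) (transversal p s) := ⟨(0, _), schreierElem_inl_last_ne_one⟩
  let Y : NontreeEdge (gens p s) (transversal p s) :=
    ⟨(1, _), schreierElem_bCycle_pred_ne_one hp hs⟩
  let Z : NontreeEdge (gens p s) (transversal p s) :=
    ⟨(1, _), schreierElem_bCycle_last_ne_one hp hs⟩
  have hXY : X ≠ Y := fun h => by simpa [X, Y] using congrArg (fun e => e.1.1) h
  have hXZ : X ≠ Z := fun h => by simpa [X, Z] using congrArg (fun e => e.1.1) h
  have hZY : Z ≠ Y := fun h => bCycle_last_ne_bCycle_pred hp hs (congrArg (fun e => e.1.2) h)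
  have hX : schreierElem (gens p s) (transversal p s) X.1.1 X.1.2 = a ^ d :=
    schreierElem_inl_last
  have hY : schreierElem (gens p s) (transversal p s) Y.1.1 Y.1.2 =
      (a ^ (p : ℕ))⁻¹ * b ^ (s : ℕ) :=
    schreierElem_bCycle_pred hp hs
  have hZ : schreierElem (gens p s) (transversal p s) Z.1.1 Z.1.2 = b ^ (d' - s) * a ^ (p : ℕ) :=
    schreierElem_bCycle_last hp hs
  -- `a ^ n * b ^ t = X ^ (n / d + 1) * (Y * Z) ^ (t / d') * Y` is the image of `Y` under
  -- `Y ↦ X ^ (n / d + 1) * Z ^ (t / d') * Y` followed by `Z ↦ Y * Z`.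
  let E := ((FreeGroup.transvection Y (of X ^ (n / d + 1) * of Z ^ (t / d'))
    (mul_mem (pow_mem (FreeGroup.of_mem_closure_compl hXY) _)
      (pow_mem (FreeGroup.of_mem_closure_compl hZY) _))).trans
    (FreeGroup.transvection Z (of Y) (FreeGroup.of_mem_closure_compl hZY.symm))).trans
    hT.schreierEquiv
  have hE : (E (of Y) : F2) = a ^ n * b ^ t := calc
    (E (of Y) : F2) = a ^ (n / d * d + (d - p)) * b ^ (t / d' * d' + s) := by
      simp only [E, MulEquiv.trans_apply, FreeGroup.transvection_of_self, map_mul, map_pow,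
        FreeGroup.transvection_of_ne _ _ hXZ, FreeGroup.transvection_of_ne _ _ hZY.symm,
        Subgroup.coe_mul, Subgroup.coe_pow, hT.schreierEquiv_of, hX, hY, hZ]
      exact pow_mul_pow_eq_word_in_generators a b _ _ p.isLt.le s.isLt.le
    _ = a ^ n * b ^ t := by rw [← hn, ← ht, Nat.div_add_mod', Nat.div_add_mod']
  refine ⟨hE ▸ (E (of Y)).2, ?_⟩
  convert primitive_of_mulEquiv E Y
  exact hE.symm

end ThetaGraph

theorem simpleElem_of_primitive {H : Subgroup F2} (hH : H.index ≠ 0) {g : H}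
    (hg : Primitive g) : SimpleElem g := by
  obtain ⟨ι, bas, i, rfl⟩ := hg
  obtain ⟨m, hm, -, ha⟩ := H.exists_pow_mem_of_index_ne_zero hH a
  obtain ⟨n, hn, -, hb⟩ := H.exists_pow_mem_of_index_ne_zero hH b
  obtain ⟨j, hj⟩ := bas.exists_ne_of_mul_ne i (x := ⟨a ^ m, ha⟩) (y := ⟨b ^ n, hb⟩)
    fun h => FreeGroup.of_pow_mul_of_pow_ne (by decide : (0 : Fin 2) ≠ 1) hm.ne' hn.ne'
      (congrArg Subtype.val h)
  exact bas.simpleElem hj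

theorem dPrim_le_index {g : F2} {H : Subgroup F2} (hH : H.index ≠ 0) (hg : g ∈ H)
    (hprim : Primitive (⟨g, hg⟩ : H)) : dPrim g ≤ H.index :=
  Nat.sInf_le ⟨Nat.pos_of_ne_zero hH, H, rfl, hg, hprim⟩

theorem dSimp_le_dPrim {g : F2} {H : Subgroup F2} (hH : H.index ≠ 0) (hg : g ∈ H)
    (hprim : Primitive (⟨g, hg⟩ : H)) : dSimp g ≤ dPrim g := by
  have hmem : dPrim g ∈ {k | 0 < k ∧ ∃ H : Subgroup F2, H.index = k ∧
      ∃ hg : g ∈ H, Primitive (⟨g, hg⟩ : H)} :=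
    Nat.sInf_mem ⟨_, Nat.pos_of_ne_zero hH, H, rfl, hg, hprim⟩
  obtain ⟨hpos, H', hidx, hg', hprim'⟩ := hmem
  exact Nat.sInf_le ⟨hpos, H', hidx, hg', simpleElem_of_primitive (hidx ▸ hpos.ne') hprim'⟩

theorem exists_subgroup_index_primitive {n t d d' : ℕ} (hd : 0 < d) (hd' : 0 < d')
    (hdn : ¬ d ∣ n) (hd't : ¬ d' ∣ t) :
    ∃ H : Subgroup F2, H.index = d + d' - 2 ∧
      ∃ hg : a ^ n * b ^ t ∈ H, Primitive (⟨_, hg⟩ : H) := by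
  have := NeZero.of_pos hd
  have := NeZero.of_pos hd'
  have hn := Nat.pos_of_ne_zero (mt Nat.dvd_of_mod_eq_zero hdn)
  have ht := Nat.pos_of_ne_zero (mt Nat.dvd_of_mod_eq_zero hd't)
  have := Nat.mod_lt n hd
  let p : Fin d := ⟨d - n % d, by omega⟩
  let s : Fin d' := ⟨t % d', Nat.mod_lt t hd'⟩
  have hp : p ≠ 0 := Fin.val_ne_zero_iff.1 (by simp only [p]; omega)
  have hs : s ≠ 0 := Fin.val_ne_zero_iff.1 ht.ne'
  exact ⟨_, (ThetaGraph.isTreeTransversal hp hs).index_vertexStabilizer.trans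
    (ThetaGraph.card_vertex hs),
    ThetaGraph.exists_primitive_mem_vertexStabilizer hp hs (by simp only [p]; omega) rfl⟩

theorem dPrim_anbt_le_general (n t d d' : ℕ)
    (hd : 2 ≤ d) (hd' : 2 ≤ d') (hdn : ¬ d ∣ n) (hd't : ¬ d' ∣ t) :
    dSimp (a ^ n * b ^ t) ≤ dPrim (a ^ n * b ^ t) ∧
      dPrim (a ^ n * b ^ t) ≤ d + d' - 2 := by
  obtain ⟨H, hidx, hg, hprim⟩ := exists_subgroup_index_primitive (by omega) (by omega) hdn hd't
  have hH : H.index ≠ 0 := by omega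
  exact ⟨dSimp_le_dPrim hH hg hprim, hidx ▸ dPrim_le_index hH hg hprim⟩

theorem dPrim_anbt_le (n t d d' : ℕ) (hn : 1 ≤ n) (ht : 1 ≤ t)
    (hd : 2 ≤ d) (hd' : 2 ≤ d') (hdn : ¬ d ∣ n) (hd't : ¬ d' ∣ t)
    (hdle : d ≤ n) (hd'le : d' ≤ t) :
    dSimp (a ^ n * b ^ t) ≤ dPrim (a ^ n * b ^ t) ∧
      dPrim (a ^ n * b ^ t) ≤ d + d' - 2 :=
  dPrim_anbt_le_general n t d d' hd hd' hdn hd't
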